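/- The translation ⟨⟨·⟩⟩ from local types to binary session types preserves the merge preorder at branching positions: if T₁ ≼⊔ T₂, where T₂ extends a branching type T₁ with additional labeled branches, then ⟨⟨T₂⟩⟩ is obtained from ⟨⟨T₁⟩⟩ by adding labeled alternatives to the corresponding external-choice (&) type. -/

import Mathlib

namespace MPST

abbrev Label := ℕ
abbrev Pt := ℕ

/-- Local (session) types: base types, end, branching `p?{lᵢ⟨Uᵢ⟩.Tᵢ}`,
selection `p!{lᵢ⟨Uᵢ⟩.Tᵢ}`, recursion (de Bruijn) and variables.
Payload types `U` are represented as local types (base types are included). -/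
inductive LocalType : Type where
  | base : ℕ → LocalType
  | endt : LocalType
  | branch : Pt → List (Label × LocalType × LocalType) → LocalType
  | select : Pt → List (Label × LocalType × LocalType) → LocalType
  | mu : LocalType → LocalType
  | var : ℕ → LocalType

/-- Lookup of a label in a list of branches (branches as finite maps). -/
def lookupB (bs : List (Label × LocalType × LocalType)) (l : Label) :
    Option (LocalType × LocalType) :=
  (bs.find? (fun e => e.1 == l)).map (fun e => e.2)

/-- The partial merge operator `⊔` as a relation: `Merge T₁ T₂ T₃` means
`T₁ ⊔ T₂` is defined and equals `T₃`. Branchings merge by union of their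
label maps, with overlapping labels merged recursively. -/
inductive Merge : LocalType → LocalType → LocalType → Prop where
  | base (n) : Merge (.base n) (.base n) (.base n)
  | endt : Merge .endt .endt .endt
  | select (p bs) : Merge (.select p bs) (.select p bs) (.select p bs)
  | var (n) : Merge (.var n) (.var n) (.var n)
  | mu {T1 T2 T3} : Merge T1 T2 T3 → Merge (.mu T1) (.mu T2) (.mu T3)
  | branch (p bs1 bs2 bs3)
      (h1 : ∀ l, lookupB bs1 l = none → lookupB bs3 l = lookupB bs2 l)
      (h2 : ∀ l, lookupB bs2 l = none → lookupB bs3 l = lookupB bs1 l)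
      (h3 : ∀ l, lookupB bs1 l ≠ none → lookupB bs2 l ≠ none →
          lookupB bs3 l ≠ none)
      (h3U : ∀ l U1 T1 U2 T2 U3 T3, lookupB bs1 l = some (U1, T1) →
          lookupB bs2 l = some (U2, T2) → lookupB bs3 l = some (U3, T3) →
          Merge U1 U2 U3)
      (h3T : ∀ l U1 T1 U2 T2 U3 T3, lookupB bs1 l = some (U1, T1) →
          lookupB bs2 l = some (U2, T2) → lookupB bs3 l = some (U3, T3) →
          Merge T1 T2 T3) :
      Merge (.branch p bs1) (.branch p bs2) (.branch p bs3)

/-- `T₁ ≼⊔ T₂` iff there is `T'` with `T₁ ⊔ T' = T₂`. -/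
def MergeLE (T1 T2 : LocalType) : Prop := ∃ T', Merge T1 T' T2

/-- Global types. -/
inductive GlobalType : Type where
  | endg : GlobalType
  | comm : Pt → Pt → List (Label × LocalType × GlobalType) → GlobalType
  | par : GlobalType → GlobalType → GlobalType
  | mu : GlobalType → GlobalType
  | gvar : ℕ → GlobalType

/-- `Participates r G` iff `r ∈ part(G)`. -/
inductive Participates : Pt → GlobalType → Prop where
  | commP (p q bs) : Participates p (.comm p q bs)
  | commQ (p q bs) : Participates q (.comm p q bs)
  | commCont {r p q bs l U G} : (l, U, G) ∈ bs → Participates r G →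
      Participates r (.comm p q bs)
  | parL {r G1 G2} : Participates r G1 → Participates r (.par G1 G2)
  | parR {r G1 G2} : Participates r G2 → Participates r (.par G1 G2)
  | muP {r G} : Participates r G → Participates r (.mu G)

mutual
/-- Merge-based projection `G↾r` as a relation. -/
inductive Proj : GlobalType → Pt → LocalType → Prop where
  | endP (r) : Proj .endg r .endt
  | commSrc {p q bs bs'} : p ≠ q → ProjB bs p bs' →
      Proj (.comm p q bs) p (.select p bs')
  | commTgt {p q bs bs'} : p ≠ q → ProjB bs q bs' →
      Proj (.comm p q bs) q (.branch p bs')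
  | commOther {p q bs r T} : p ≠ q → r ≠ p → r ≠ q → ProjM bs r T →
      Proj (.comm p q bs) r T
  | parL {G1 G2 r T} : Participates r G1 → ¬ Participates r G2 →
      Proj G1 r T → Proj (.par G1 G2) r T
  | parR {G1 G2 r T} : ¬ Participates r G1 → Participates r G2 →
      Proj G2 r T → Proj (.par G1 G2) r T
  | parNone {G1 G2 r} : ¬ Participates r G1 → ¬ Participates r G2 →
      Proj (.par G1 G2) r .endt
  | gvarP (n r) : Proj (.gvar n) r (.var n)
  | muProj {G r T} : Proj G r T → T ≠ .var 0 → Proj (.mu G) r (.mu T)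
  | muEnd {G r} : Proj G r (.var 0) → Proj (.mu G) r .endt

/-- Pointwise projection of the branches (used for the two endpoints). -/
inductive ProjB : List (Label × LocalType × GlobalType) → Pt →
    List (Label × LocalType × LocalType) → Prop where
  | nil (r) : ProjB [] r []
  | cons {l U G T r bs bs'} : Proj G r T → ProjB bs r bs' →
      ProjB ((l, U, G) :: bs) r ((l, U, T) :: bs')

/-- Projection of a non-endpoint participant: the iterated merge `⊔ᵢ Gᵢ↾r`. -/
inductive ProjM : List (Label × LocalType × GlobalType) → Pt → LocalType → Prop where
  | single {l U G r T} : Proj G r T → ProjM [(l, U, G)] r T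
  | cons {l U G r T1 T2 T3 bs} : Proj G r T1 → ProjM bs r T2 → Merge T1 T2 T3 →
      ProjM ((l, U, G) :: bs) r T3
end

/-- A global type is well-formed when the projection onto every participant
is defined. -/
def WF (G : GlobalType) : Prop := ∀ r, Participates r G → ∃ T, Proj G r T

end MPST
namespace MPST

/-- Binary session types (linear logic propositions), with n-ary additives. -/
inductive SType : Type where
  | one : SType
  | tensor : SType → SType → SType
  | lolli : SType → SType → SType
  | withT : List (Label × SType) → SType
  | oplus : List (Label × SType) → SType
  | bang : SType → SType
  | nuT : SType → SType
  | svar : ℕ → SType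

def lookupS (bs : List (Label × SType)) (l : Label) : Option SType :=
  (bs.find? (fun e => e.1 == l)).map (fun e => e.2)

mutual
/-- The translation `⟨⟨·⟩⟩` from local types into binary session types. -/
inductive Trans : LocalType → SType → Prop where
  | base (n) : Trans (.base n) .one
  | endt : Trans .endt .one
  | select {p bs cs} : TransB true bs cs → Trans (.select p bs) (.oplus cs)
  | branch {p bs cs} : TransB false bs cs → Trans (.branch p bs) (.withT cs)
  | mu {T A} : Trans T A → Trans (.mu T) (.nuT A)
  | var (n) : Trans (.var n) (.svar n)

/-- Branchwise translation: `true` for selections (`⊗`), `false` for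
branchings (`⊸`). -/
inductive TransB : Bool → List (Label × LocalType × LocalType) →
    List (Label × SType) → Prop where
  | nil (b) : TransB b [] []
  | consSel {l U T AU AT bs cs} : Trans U AU → Trans T AT → TransB true bs cs →
      TransB true ((l, U, T) :: bs) ((l, .tensor AU AT) :: cs)
  | consBra {l U T AU AT bs cs} : Trans U AU → Trans T AT → TransB false bs cs →
      TransB false ((l, U, T) :: bs) ((l, .lolli AU AT) :: cs)
end

mutual
/-- The swapping congruence `≃sw` on global types. -/
inductive Swap : GlobalType → GlobalType → Prop where
  | refl (G) : Swap G G
  | symm {G1 G2} : Swap G1 G2 → Swap G2 G1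
  | trans {G1 G2 G3} : Swap G1 G2 → Swap G2 G3 → Swap G1 G3
  | commCong {p q bs bs'} : SwapB bs bs' → Swap (.comm p q bs) (.comm p q bs')
  | parCong {G1 G2 G1' G2'} : Swap G1 G1' → Swap G2 G2' →
      Swap (.par G1 G2) (.par G1' G2')
  | muCong {G G'} : Swap G G' → Swap (.mu G) (.mu G')
  | sw1 (p1 q1 p2 q2 : Pt) (os is' : List (Label × LocalType))
      (M : Label → Label → GlobalType) :
      p1 ≠ p2 → p1 ≠ q2 → q1 ≠ p2 → q1 ≠ q2 →
      Swap
        (.comm p1 q1 (os.map fun e => (e.1, e.2,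
          GlobalType.comm p2 q2 (is'.map fun e' => (e'.1, e'.2, M e.1 e'.1)))))
        (.comm p2 q2 (is'.map fun e' => (e'.1, e'.2,
          GlobalType.comm p1 q1 (os.map fun e => (e.1, e.2, M e.1 e'.1)))))
  | sw2 (p q : Pt) (G1 : GlobalType) (bs : List (Label × LocalType × GlobalType)) :
      (∀ r, Participates r G1 → r ≠ p ∧ r ≠ q) →
      Swap (.comm p q (bs.map fun e => (e.1, e.2.1, GlobalType.par G1 e.2.2)))
           (.par G1 (.comm p q bs))
  | sw2r (p q : Pt) (G1 : GlobalType) (bs : List (Label × LocalType × GlobalType)) :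
      (∀ r, Participates r G1 → r ≠ p ∧ r ≠ q) →
      Swap (.comm p q (bs.map fun e => (e.1, e.2.1, GlobalType.par e.2.2 G1)))
           (.par (.comm p q bs) G1)

inductive SwapB : List (Label × LocalType × GlobalType) →
    List (Label × LocalType × GlobalType) → Prop where
  | nil : SwapB [] []
  | cons {l U G G' bs bs'} : Swap G G' → SwapB bs bs' →
      SwapB ((l, U, G) :: bs) ((l, U, G') :: bs')
end

/-- Recursion-free global types (the class `Gfin`), with `p ≠ q` and
nonempty finite branching as in the grammar. -/
inductive NoRec : GlobalType → Prop where
  | endg : NoRec .endg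
  | comm {p q bs} : p ≠ q → bs ≠ [] → (∀ e ∈ bs, NoRec e.2.2) →
      NoRec (.comm p q bs)
  | par {G1 G2} : NoRec G1 → NoRec G2 → NoRec (.par G1 G2)

end MPST
namespace MPST

/-- Session π-calculus processes, in de Bruijn style (so α-equivalence is
definitional and all substitutions are capture-avoiding). `nuP`, `recv` and
`srv` bind one name. Bound output `x̄(v).P` is represented as
`nuP (send (x+1) 0 P)`. -/
inductive Proc : Type where
  | nil : Proc
  | par : Proc → Proc → Proc
  | nuP : Proc → Proc
  | send : ℕ → ℕ → Proc → Proc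
  | recv : ℕ → Proc → Proc
  | srv : ℕ → Proc → Proc
  | sel : ℕ → Label → Proc → Proc
  | branchP : ℕ → List (Label × Proc) → Proc
  | link : ℕ → ℕ → Proc

mutual
/-- Generic traversal acting on names, keeping track of the binder depth. -/
def mapVar (f : ℕ → ℕ → ℕ) (k : ℕ) : Proc → Proc
  | .nil => .nil
  | .par P Q => .par (mapVar f k P) (mapVar f k Q)
  | .nuP P => .nuP (mapVar f (k + 1) P)
  | .send x y P => .send (f k x) (f k y) (mapVar f k P)
  | .recv x P => .recv (f k x) (mapVar f (k + 1) P)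
  | .srv x P => .srv (f k x) (mapVar f (k + 1) P)
  | .sel x l P => .sel (f k x) l (mapVar f k P)
  | .branchP x bs => .branchP (f k x) (mapVarList f k bs)
  | .link x y => .link (f k x) (f k y)

def mapVarList (f : ℕ → ℕ → ℕ) (k : ℕ) : List (Label × Proc) → List (Label × Proc)
  | [] => []
  | (l, P) :: bs => (l, mapVar f k P) :: mapVarList f k bs
end

/-- Renaming of free names by `g` (binders are respected). -/
def renameP (g : ℕ → ℕ) : Proc → Proc :=
  mapVar (fun k n => if n < k then n else g (n - k) + k) 0

/-- Shift all free names up by `d`. -/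
def shiftP (d : ℕ) : Proc → Proc := renameP (· + d)

/-- Capture-avoiding substitution `P{x/y}` of the free name `x` for the
free name `y`. -/
def substName (x y : ℕ) : Proc → Proc :=
  renameP (fun n => if n = y then x else n)

/-- Open the outermost binder with the free name `y` (used when a binder is
removed, e.g. in communication: `P{y/z}` for the bound `z`). -/
def open0 (y : ℕ) : Proc → Proc :=
  mapVar (fun k n => if n < k then n else if n = k then y + k else n - 1) 0

/-- Exchange the two outermost binders. -/
def swapTop : Proc → Proc :=
  mapVar (fun k n => if n = k then k + 1 else if n = k + 1 then k else n) 0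

/-- `FreeIn n P` iff the name `n` occurs free in `P`. -/
inductive FreeIn : ℕ → Proc → Prop where
  | parL {n P Q} : FreeIn n P → FreeIn n (.par P Q)
  | parR {n P Q} : FreeIn n Q → FreeIn n (.par P Q)
  | nuB {n P} : FreeIn (n + 1) P → FreeIn n (.nuP P)
  | sendX {x y P} : FreeIn x (.send x y P)
  | sendY {x y P} : FreeIn y (.send x y P)
  | sendC {n x y P} : FreeIn n P → FreeIn n (.send x y P)
  | recvX {x P} : FreeIn x (.recv x P)
  | recvC {n x P} : FreeIn (n + 1) P → FreeIn n (.recv x P)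
  | srvX {x P} : FreeIn x (.srv x P)
  | srvC {n x P} : FreeIn (n + 1) P → FreeIn n (.srv x P)
  | selX {x l P} : FreeIn x (.sel x l P)
  | selC {n x l P} : FreeIn n P → FreeIn n (.sel x l P)
  | braX {x bs} : FreeIn x (.branchP x bs)
  | braC {n x bs l P} : (l, P) ∈ bs → FreeIn n P → FreeIn n (.branchP x bs)
  | linkL {x y} : FreeIn x (.link x y)
  | linkR {x y} : FreeIn y (.link x y)

mutual
/-- Structural congruence (α-conversion is definitional in de Bruijn style). -/
inductive SC : Proc → Proc → Prop where
  | refl (P) : SC P P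
  | symm {P Q} : SC P Q → SC Q P
  | trans {P Q R} : SC P Q → SC Q R → SC P R
  | parNil (P) : SC (.par P .nil) P
  | parComm (P Q) : SC (.par P Q) (.par Q P)
  | parAssoc (P Q R) : SC (.par P (.par Q R)) (.par (.par P Q) R)
  | nuNil : SC (.nuP .nil) .nil
  | nuSwap (P) : SC (.nuP (.nuP P)) (.nuP (.nuP (swapTop P)))
  | linkComm (x y) : SC (.link x y) (.link y x)
  | scopeExt {P Q} : SC (.par P (.nuP Q)) (.nuP (.par (shiftP 1 P) Q))
  | parCong {P P' Q Q'} : SC P P' → SC Q Q' → SC (.par P Q) (.par P' Q')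
  | nuCong {P P'} : SC P P' → SC (.nuP P) (.nuP P')
  | sendCong {x y P P'} : SC P P' → SC (.send x y P) (.send x y P')
  | recvCong {x P P'} : SC P P' → SC (.recv x P) (.recv x P')
  | srvCong {x P P'} : SC P P' → SC (.srv x P) (.srv x P')
  | selCong {x l P P'} : SC P P' → SC (.sel x l P) (.sel x l P')
  | branchCong {x bs bs'} : SCL bs bs' → SC (.branchP x bs) (.branchP x bs')

inductive SCL : List (Label × Proc) → List (Label × Proc) → Prop where
  | nil : SCL [] []
  | cons {l P P' bs bs'} : SC P P' → SCL bs bs' →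
      SCL ((l, P) :: bs) ((l, P') :: bs')
end

/-- Process reduction. -/
inductive Red : Proc → Proc → Prop where
  | comm {x y Q P} : Red (.par (.send x y Q) (.recv x P)) (.par Q (open0 y P))
  | commSrv {x y Q P} :
      Red (.par (.send x y Q) (.srv x P)) (.par (.par Q (open0 y P)) (.srv x P))
  | linkRed {y P} : Red (.nuP (.par (.link 0 (y + 1)) P)) (open0 y P)
  | selRed {x l P bs Q} : (l, Q) ∈ bs →
      Red (.par (.sel x l P) (.branchP x bs)) (.par P Q)
  | parCtx {P Q Q'} : Red Q Q' → Red (.par P Q) (.par P Q')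
  | resCtx {P Q} : Red P Q → Red (.nuP P) (.nuP Q)
  | scRed {P P' Q Q'} : SC P P' → Red P' Q' → SC Q' Q → Red P Q

mutual
/-- The (finite) medium process `M⟦G⟧`, with participant `p` represented by
the channel `c p`. (On recursive constructs, which are outside `Gfin`,
the medium is set to `0`.) -/
def Medium (c : Pt → ℕ) : GlobalType → Proc
  | .endg => .nil
  | .comm p q bs => .branchP (c p) (MediumB c p q bs)
  | .par G1 G2 => .par (Medium c G1) (Medium c G2)
  | .mu _ => .nil
  | .gvar _ => .nil

def MediumB (c : Pt → ℕ) (p q : Pt) :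
    List (Label × LocalType × GlobalType) → List (Label × Proc)
  | [] => []
  | (l, _, G) :: bs =>
      (l, .recv (c p) (.sel (c q + 1) l (.nuP (.send (c q + 2) 0
          (.par (.link 1 0) (Medium (fun r => c r + 2) G)))))) :: MediumB c p q bs
end

/-- Typing contexts: association lists of (free) names and binary session
types. -/
abbrev Ctx := List (ℕ × SType)

/-- Shifting a context under one binder. -/
def shC (Δ : Ctx) : Ctx := Δ.map (fun e => (e.1 + 1, e.2))

/-- The linear-logic based session typing judgment `Γ; Δ ⊢ P :: z:C`
(Caires–Pfenning), on the recursion-free fragment, with n-ary additives,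
a silent left-& weakening built into `tWithL`, and exchange. -/
inductive Types : Ctx → Ctx → Proc → ℕ → SType → Prop where
  | tid {Γ : Ctx} {x z A} : Types Γ [(x, A)] (.link x z) z A
  | t1R {Γ : Ctx} {x} : Types Γ [] .nil x .one
  | t1L {Γ Δ P z C x} : Types Γ Δ P z C → Types Γ ((x, .one) :: Δ) P z C
  | exch {Γ Δ Δ' P z C} : List.Perm Δ Δ' → Types Γ Δ P z C → Types Γ Δ' P z C
  | tcut {Γ Δ1 Δ2 P Q z A C} :
      Types (shC Γ) (shC Δ1) P 0 A →
      Types (shC Γ) ((0, A) :: shC Δ2) Q (z + 1) C →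
      Types Γ (Δ1 ++ Δ2) (.nuP (.par P Q)) z C
  | tTensorR {Γ Δ1 Δ2 P Q x A B} :
      Types (shC Γ) (shC Δ1) P 0 A →
      Types (shC Γ) (shC Δ2) Q (x + 1) B →
      Types Γ (Δ1 ++ Δ2) (.nuP (.send (x + 1) 0 (.par P Q))) x (.tensor A B)
  | tTensorL {Γ Δ P x z A B C} :
      Types (shC Γ) ((0, A) :: (x + 1, B) :: shC Δ) P (z + 1) C →
      Types Γ ((x, .tensor A B) :: Δ) (.recv x P) z C
  | tLolliR {Γ Δ P x A B} :
      Types (shC Γ) ((0, A) :: shC Δ) P (x + 1) B →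
      Types Γ Δ (.recv x P) x (.lolli A B)
  | tLolliL {Γ Δ1 Δ2 P Q x z A B C} :
      Types (shC Γ) (shC Δ1) P 0 A →
      Types (shC Γ) ((x + 1, B) :: shC Δ2) Q (z + 1) C →
      Types Γ ((x, .lolli A B) :: (Δ1 ++ Δ2)) (.nuP (.send (x + 1) 0 (.par P Q))) z C
  | tPlusR {Γ Δ P x l A bs} : (l, A) ∈ bs → Types Γ Δ P x A →
      Types Γ Δ (.sel x l P) x (.oplus bs)
  | tPlusL {Γ Δ x z C bs ps} :
      (∀ l A, (l, A) ∈ bs → ∃ P, (l, P) ∈ ps) →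
      (∀ l P, (l, P) ∈ ps → ∃ A, (l, A) ∈ bs) →
      (∀ l A P, (l, A) ∈ bs → (l, P) ∈ ps → Types Γ ((x, A) :: Δ) P z C) →
      Types Γ ((x, .oplus bs) :: Δ) (.branchP x ps) z C
  | tWithR {Γ Δ x bs ps} :
      (∀ l A, (l, A) ∈ bs → ∃ P, (l, P) ∈ ps) →
      (∀ l P, (l, P) ∈ ps → ∃ A, (l, A) ∈ bs) →
      (∀ l A P, (l, A) ∈ bs → (l, P) ∈ ps → Types Γ Δ P x A) →
      Types Γ Δ (.branchP x ps) x (.withT bs)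
  | tWithL {Γ Δ P x z l A C bs} : (l, A) ∈ bs →
      Types Γ ((x, A) :: Δ) P z C →
      Types Γ ((x, .withT bs) :: Δ) (.sel x l P) z C

end MPST

/-! The translation is functional and acts on a branching label by label: the alternative of
`⟨⟨p?{…}⟩⟩` at `l` is determined by the branch at `l`. Hence every alternative of `⟨⟨T₁⟩⟩`
reappears in `⟨⟨T₂⟩⟩` as soon as every branch of `T₁` reappears in `T₂`. -/

namespace MPST

mutual
theorem Trans.unique : ∀ {T A A'}, Trans T A → Trans T A' → A = A'
  | _, _, _, .base _, .base _ => rfl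
  | _, _, _, .endt, .endt => rfl
  | _, _, _, .var _, .var _ => rfl
  | _, _, _, .select h, .select h' => by rw [TransB.unique h h']
  | _, _, _, .branch h, .branch h' => by rw [TransB.unique h h']
  | _, _, _, .mu h, .mu h' => by rw [Trans.unique h h']

theorem TransB.unique : ∀ {b bs cs cs'}, TransB b bs cs → TransB b bs cs' → cs = cs'
  | _, _, _, _, .nil _, .nil _ => rfl
  | _, _, _, _, .consSel hU hT h, .consSel hU' hT' h' => by
    rw [Trans.unique hU hU', Trans.unique hT hT', TransB.unique h h']
  | _, _, _, _, .consBra hU hT h, .consBra hU' hT' h' => by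
    rw [Trans.unique hU hU', Trans.unique hT hT', TransB.unique h h']
end

theorem TransB.rel_lookup {b bs cs} (h : TransB b bs cs) (l : Label) :
    Option.Rel (fun e a => ∃ AU AT, Trans e.1 AU ∧ Trans e.2 AT ∧
      a = bif b then .tensor AU AT else .lolli AU AT) (lookupB bs l) (lookupS cs l) := by
  induction bs generalizing cs with
  | nil => cases h; exact .none
  | cons e bs ih =>
    obtain ⟨l', U, T⟩ := e
    by_cases hl : l' = l
    · subst hl
      cases h with
      | consSel hU hT _ | consBra hU hT _ =>
        simp only [lookupB, lookupS, List.find?_cons_of_pos, beq_self_eq_true, Option.map_some]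
        exact Option.rel_some_some.mpr ⟨_, _, hU, hT, rfl⟩
    · have hne : (l' == l) = false := beq_false_of_ne hl
      cases h with
      | consSel _ _ h | consBra _ _ h => simpa [lookupB, lookupS, hne] using ih h

theorem TransB.lookupS_of_lookupB {b bs bs' cs cs'} (h : TransB b bs cs)
    (h' : TransB b bs' cs') {l : Label}
    (hl : ∀ e, lookupB bs l = some e → lookupB bs' l = some e) :
    ∀ a, lookupS cs l = some a → lookupS cs' l = some a := by
  intro a ha
  have r := h.rel_lookup l
  have r' := h'.rel_lookup l
  rw [ha] at r
  cases hb : lookupB bs l with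
  | none => rw [hb] at r; exact absurd r Option.not_rel_none_some
  | some e =>
    rw [hb, Option.rel_some_some] at r
    rw [hl e hb] at r'
    cases hs : lookupS cs' l with
    | none => rw [hs] at r'; exact absurd r' Option.not_rel_some_none
    | some a' =>
      rw [hs, Option.rel_some_some] at r'
      obtain ⟨AU, AT, hU, hT, rfl⟩ := r
      obtain ⟨AU', AT', hU', hT', rfl⟩ := r'
      rw [Trans.unique hU hU', Trans.unique hT hT']

end MPST

/-- The translation `⟨⟨·⟩⟩` preserves the merge preorder at
branching positions: if the branching `T₂` extends the branching `T₁` with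
additional labeled branches (and `T₁ ≼⊔ T₂`), then `⟨⟨T₂⟩⟩` is an
external-choice (`&`) type extending the `&`-type `⟨⟨T₁⟩⟩` with additional
labeled alternatives. -/
theorem trans_preserves_branch_extension
    (p : MPST.Pt) (bs1 bs2 : List (MPST.Label × MPST.LocalType × MPST.LocalType))
    (A1 A2 : MPST.SType)
    (hle : MPST.MergeLE (.branch p bs1) (.branch p bs2))
    (hext : ∀ l e, MPST.lookupB bs1 l = some e → MPST.lookupB bs2 l = some e)
    (h1 : MPST.Trans (.branch p bs1) A1)
    (h2 : MPST.Trans (.branch p bs2) A2) :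
    ∃ cs1 cs2, A1 = .withT cs1 ∧ A2 = .withT cs2 ∧
      ∀ l a, MPST.lookupS cs1 l = some a → MPST.lookupS cs2 l = some a := by
  cases h1 with
  | branch hB1 =>
    cases h2 with
    | branch hB2 => exact ⟨_, _, rfl, rfl, fun l => hB1.lookupS_of_lookupB hB2 (hext l)⟩
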